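/- Let T be the (q+1)-homogeneous rooted tree with q ≥ 2 and let 1 ≤ p < ∞. Then no self-map φ of T induces a compact composition operator on T_{p,0}: for every self-map φ of T, the operator C_φ is not a compact operator on T_{p,0}. -/

import Mathlib

/-!
Let `f_k` be the indicator function of `φ(D_k)`. It is finitely supported, hence lies in the
closed unit ball of `T_{p,0}`, while `f_k ∘ φ ≡ 1` on `D_k`, so `M_p(k, f_k ∘ φ) = 1`. If a
subsequence `f_{s_k} ∘ φ` converged to some `g ∈ T_{p,0}`, Minkowski's inequality at level `s_k`
would give `‖f_{s_k} ∘ φ - g‖_p ≥ 1 - M_p(s_k, g) → 1`.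
-/

open scoped BigOperators Classical

noncomputable section

/-- `treeC q n` is the number `c_n` of vertices at level `n` of the
`(q+1)`-homogeneous rooted tree: `c_0 = 1` and `c_n = (q+1) q^(n-1)` for `n ≥ 1`. -/
def treeC (q n : ℕ) : ℕ := if n = 0 then 1 else (q + 1) * q ^ (n - 1)

/-- An abstract `(q+1)`-homogeneous rooted tree, described by its vertex set, root,
level function `|·|` (graph distance to the root), and the level counts:
level `n` contains exactly `c_n = treeC q n` vertices. -/
structure HomTree (q : ℕ) where
  V : Type
  root : V
  level : V → ℕ
  level_eq_zero_iff : ∀ v : V, level v = 0 ↔ v = root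
  finiteLevel : ∀ n : ℕ, {v : V | level v = n}.Finite
  card_level : ∀ n : ℕ, (finiteLevel n).toFinset.card = treeC q n

namespace HomTree

variable {q : ℕ} (T : HomTree q)

/-- The set `D_n` of vertices of level `n`, as a finset. -/
def levelFinset (n : ℕ) : Finset T.V := (T.finiteLevel n).toFinset

/-- `M_p(n, f)` for `0 < p < ∞`:
`M_p(n,f) = ((1/c_n) ∑_{|v|=n} |f v|^p)^(1/p)` (which equals `|f o|` for `n = 0`). -/
def Mp (p : ℝ) (n : ℕ) (f : T.V → ℂ) : ℝ :=
  ((1 / (treeC q n : ℝ)) * ∑ v ∈ T.levelFinset n, ‖f v‖ ^ p) ^ (1 / p)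

/-- `M_∞(n, f) = max_{|v| = n} |f v|`. -/
def Minf (n : ℕ) (f : T.V → ℂ) : ℝ :=
  sSup ((fun v => ‖f v‖) '' {v : T.V | T.level v = n})

/-- `f ∈ T_p`, i.e. `‖f‖_p = sup_n M_p(n,f) < ∞`. -/
def memTp (p : ℝ) (f : T.V → ℂ) : Prop := BddAbove (Set.range fun n => T.Mp p n f)

/-- `‖f‖_p = sup_n M_p(n, f)`. -/
def normTp (p : ℝ) (f : T.V → ℂ) : ℝ := ⨆ n, T.Mp p n f

/-- `f ∈ T_∞`. -/
def memTinf (f : T.V → ℂ) : Prop := BddAbove (Set.range fun n => T.Minf n f)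

/-- `‖f‖_∞ = sup_n M_∞(n, f)`. -/
def normTinf (f : T.V → ℂ) : ℝ := ⨆ n, T.Minf n f

/-- `f ∈ T_{p,0}`: `f ∈ T_p` and `M_p(n,f) → 0` as `n → ∞`. -/
def memTp0 (p : ℝ) (f : T.V → ℂ) : Prop :=
  T.memTp p f ∧ Filter.Tendsto (fun n => T.Mp p n f) Filter.atTop (nhds 0)

/-- `f ∈ T_{∞,0}`. -/
def memTinf0 (f : T.V → ℂ) : Prop :=
  T.memTinf f ∧ Filter.Tendsto (fun n => T.Minf n f) Filter.atTop (nhds 0)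

/-- `N_φ(n, w)`: the number of preimages of `w` under `φ` at level `n`. -/
def Nphi (phi : T.V → T.V) (n : ℕ) (w : T.V) : ℕ :=
  ((T.levelFinset n).filter fun v => phi v = w).card

/-- `N_{m,n} = max_{|w| = m} N_φ(n, w)`. -/
def Nmax (phi : T.V → T.V) (m n : ℕ) : ℕ :=
  (T.levelFinset m).sup fun w => T.Nphi phi n w

/-- `C_φ` is a bounded operator on `T_p`: it maps `T_p` into `T_p` and
`‖f ∘ φ‖_p ≤ C ‖f‖_p` for some constant `C`. -/
def BoundedCompTp (p : ℝ) (phi : T.V → T.V) : Prop :=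
  (∀ f : T.V → ℂ, T.memTp p f → T.memTp p (f ∘ phi)) ∧
  ∃ C : ℝ, ∀ f : T.V → ℂ, T.memTp p f → T.normTp p (f ∘ phi) ≤ C * T.normTp p f

/-- The operator norm of `C_φ` on `T_p`: `sup {‖f ∘ φ‖_p : f ∈ T_p, ‖f‖_p = 1}`. -/
def opNormTp (p : ℝ) (phi : T.V → T.V) : ℝ :=
  sSup {x : ℝ | ∃ f : T.V → ℂ, T.memTp p f ∧ T.normTp p f = 1 ∧ x = T.normTp p (f ∘ phi)}

/-- `C_φ` is a bounded operator on `T_{p,0}`. -/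
def BoundedCompTp0 (p : ℝ) (phi : T.V → T.V) : Prop :=
  (∀ f : T.V → ℂ, T.memTp0 p f → T.memTp0 p (f ∘ phi)) ∧
  ∃ C : ℝ, ∀ f : T.V → ℂ, T.memTp0 p f → T.normTp p (f ∘ phi) ≤ C * T.normTp p f

/-- The operator norm of `C_φ` on `T_{p,0}`. -/
def opNormTp0 (p : ℝ) (phi : T.V → T.V) : ℝ :=
  sSup {x : ℝ | ∃ f : T.V → ℂ, T.memTp0 p f ∧ T.normTp p f = 1 ∧ x = T.normTp p (f ∘ phi)}

/-- `C_φ` is a bounded operator on `T_{∞,0}`. -/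
def BoundedCompTinf0 (phi : T.V → T.V) : Prop :=
  (∀ f : T.V → ℂ, T.memTinf0 f → T.memTinf0 (f ∘ phi)) ∧
  ∃ C : ℝ, ∀ f : T.V → ℂ, T.memTinf0 f → T.normTinf (f ∘ phi) ≤ C * T.normTinf f

end HomTree
namespace HomTree

variable {q : ℕ} (T : HomTree q)

/-- `C_φ` is a compact operator on `T_{p,0}`: it is bounded on `T_{p,0}` and the image of
the closed unit ball of `T_{p,0}` is relatively compact in `T_{p,0}`, i.e. every sequence
in the image of the closed unit ball has a subsequence converging in norm to an element
of `T_{p,0}`. -/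
def CompactCompTp0 (p : ℝ) (phi : T.V → T.V) : Prop :=
  T.BoundedCompTp0 p phi ∧
  ∀ f : ℕ → T.V → ℂ, (∀ k, T.memTp0 p (f k)) → (∀ k, T.normTp p (f k) ≤ 1) →
    ∃ (g : T.V → ℂ) (s : ℕ → ℕ), T.memTp0 p g ∧ StrictMono s ∧
      Filter.Tendsto (fun k => T.normTp p ((f (s k)) ∘ phi - g)) Filter.atTop (nhds 0)

end HomTree

open Filter Topology

lemma treeC_pos {q : ℕ} (hq : 0 < q) (n : ℕ) : 0 < treeC q n := by
  unfold treeC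
  split_ifs <;> positivity

namespace HomTree

variable {q : ℕ} (T : HomTree q) {p : ℝ}

lemma mem_levelFinset {n : ℕ} {v : T.V} : v ∈ T.levelFinset n ↔ T.level v = n :=
  (T.finiteLevel n).mem_toFinset

lemma Mp_neg (n : ℕ) (f : T.V → ℂ) : T.Mp p n (-f) = T.Mp p n f := by
  simp only [Mp, Pi.neg_apply, norm_neg]

lemma Mp_add_le (hp : 1 ≤ p) (n : ℕ) (f g : T.V → ℂ) :
    T.Mp p n (f + g) ≤ T.Mp p n f + T.Mp p n g := by
  have hsum : ∀ h : T.V → ℂ, 0 ≤ ∑ v ∈ T.levelFinset n, ‖h v‖ ^ p := fun h =>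
    Finset.sum_nonneg fun _ _ => Real.rpow_nonneg (norm_nonneg _) _
  have hminkowski : (∑ v ∈ T.levelFinset n, ‖(f + g) v‖ ^ p) ^ (1 / p) ≤
      (∑ v ∈ T.levelFinset n, ‖f v‖ ^ p) ^ (1 / p) +
        (∑ v ∈ T.levelFinset n, ‖g v‖ ^ p) ^ (1 / p) :=
    calc _ ≤ (∑ v ∈ T.levelFinset n, (‖f v‖ + ‖g v‖) ^ p) ^ (1 / p) := by
          gcongr with v
          exact norm_add_le _ _
      _ ≤ _ := Real.Lp_add_le_of_nonneg _ hp (fun _ _ => norm_nonneg _)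
          (fun _ _ => norm_nonneg _)
  simp only [Mp, Real.mul_rpow (by positivity : (0 : ℝ) ≤ 1 / (treeC q n : ℝ)) (hsum _)]
  rw [← mul_add]
  gcongr

lemma Mp_sub_le (hp : 1 ≤ p) (n : ℕ) (f g : T.V → ℂ) :
    T.Mp p n (f - g) ≤ T.Mp p n f + T.Mp p n g := by
  simpa only [sub_eq_add_neg, Mp_neg] using T.Mp_add_le hp n f (-g)

lemma Mp_le_Mp_sub_add (hp : 1 ≤ p) (n : ℕ) (f g : T.V → ℂ) :
    T.Mp p n f ≤ T.Mp p n (f - g) + T.Mp p n g := by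
  simpa only [sub_add_cancel] using T.Mp_add_le hp n (f - g) g

lemma Mp_le_of_norm_le (hp : 0 < p) {C : ℝ} {f : T.V → ℂ} (hf : ∀ v, ‖f v‖ ≤ C) (n : ℕ) :
    T.Mp p n f ≤ C := by
  have hC : 0 ≤ C := (norm_nonneg _).trans (hf T.root)
  have hCp : 0 ≤ C ^ p := Real.rpow_nonneg hC p
  have hc : (0 : ℝ) ≤ treeC q n := Nat.cast_nonneg _
  have hsum : ∑ v ∈ T.levelFinset n, ‖f v‖ ^ p ≤ treeC q n * C ^ p :=
    calc _ ≤ ∑ _v ∈ T.levelFinset n, C ^ p :=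
          Finset.sum_le_sum fun v _ => Real.rpow_le_rpow (norm_nonneg _) (hf v) hp.le
      _ = treeC q n * C ^ p := by
          rw [Finset.sum_const, nsmul_eq_mul, levelFinset, T.card_level]
  have hmean : 1 / (treeC q n : ℝ) * ∑ v ∈ T.levelFinset n, ‖f v‖ ^ p ≤ C ^ p := by
    rcases hc.eq_or_lt with hc0 | hcpos
    · simpa [← hc0] using hCp
    · calc _ ≤ 1 / (treeC q n : ℝ) * (treeC q n * C ^ p) := by gcongr
        _ = C ^ p := by field_simp
  calc T.Mp p n f ≤ (C ^ p) ^ (1 / p) :=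
        Real.rpow_le_rpow (mul_nonneg (by positivity)
          (Finset.sum_nonneg fun _ _ => Real.rpow_nonneg (norm_nonneg _) _)) hmean (by positivity)
    _ = C := by rw [← Real.rpow_mul hC, mul_one_div_cancel hp.ne', Real.rpow_one]

lemma memTp_of_norm_le (hp : 0 < p) {C : ℝ} {f : T.V → ℂ} (hf : ∀ v, ‖f v‖ ≤ C) :
    T.memTp p f :=
  ⟨C, by rintro _ ⟨n, rfl⟩; exact T.Mp_le_of_norm_le hp hf n⟩

lemma normTp_le_of_norm_le (hp : 0 < p) {C : ℝ} {f : T.V → ℂ} (hf : ∀ v, ‖f v‖ ≤ C) :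
    T.normTp p f ≤ C :=
  ciSup_le (T.Mp_le_of_norm_le hp hf)

lemma memTp_sub (hp : 1 ≤ p) {f g : T.V → ℂ} (hf : T.memTp p f) (hg : T.memTp p g) :
    T.memTp p (f - g) := by
  obtain ⟨A, hA⟩ := hf
  obtain ⟨B, hB⟩ := hg
  exact ⟨A + B, by
    rintro _ ⟨n, rfl⟩
    exact (T.Mp_sub_le hp n f g).trans (add_le_add (hA ⟨n, rfl⟩) (hB ⟨n, rfl⟩))⟩

lemma Mp_eq_one (hq : 0 < q) {n : ℕ} {f : T.V → ℂ} (hf : ∀ v, T.level v = n → f v = 1) :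
    T.Mp p n f = 1 := by
  have hsum : ∑ v ∈ T.levelFinset n, ‖f v‖ ^ p = treeC q n := by
    rw [Finset.sum_congr rfl fun v hv => by rw [hf v (T.mem_levelFinset.1 hv)]]
    simp only [norm_one, Real.one_rpow, Finset.sum_const, nsmul_eq_mul, mul_one, levelFinset,
      T.card_level]
  rw [Mp, hsum, one_div_mul_cancel (Nat.cast_ne_zero.2 (treeC_pos hq n).ne'), Real.one_rpow]

lemma Mp_eq_zero (hp : p ≠ 0) {n : ℕ} {f : T.V → ℂ} (hf : ∀ v, T.level v = n → f v = 0) :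
    T.Mp p n f = 0 := by
  have hsum : ∑ v ∈ T.levelFinset n, ‖f v‖ ^ p = 0 :=
    Finset.sum_eq_zero fun v hv => by
      rw [hf v (T.mem_levelFinset.1 hv), norm_zero, Real.zero_rpow hp]
  rw [Mp, hsum, mul_zero, Real.zero_rpow (one_div_ne_zero hp)]

lemma memTp0_of_tendsto {f : T.V → ℂ} (hf : Tendsto (fun n => T.Mp p n f) atTop (𝓝 0)) :
    T.memTp0 p f :=
  ⟨hf.bddAbove_range, hf⟩

lemma memTp0_of_support_finite (hp : p ≠ 0) {f : T.V → ℂ} (hf : f.support.Finite) :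
    T.memTp0 p f := by
  obtain ⟨N, hN⟩ := (hf.image T.level).bddAbove
  refine T.memTp0_of_tendsto (tendsto_const_nhds.congr' ?_)
  filter_upwards [eventually_gt_atTop N] with n hn
  refine (T.Mp_eq_zero hp fun v hv => ?_).symm
  by_contra hfv
  have := hN ⟨v, hfv, hv⟩
  omega

lemma not_tendsto_normTp_sub (hp : 1 ≤ p) {u : ℕ → T.V → ℂ} {n : ℕ → ℕ} {g : T.V → ℂ}
    (hu : ∀ k, T.memTp p (u k)) (hmass : ∀ k, 1 ≤ T.Mp p (n k) (u k))
    (hn : Tendsto n atTop atTop) (hg : T.memTp0 p g) :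
    ¬ Tendsto (fun k => T.normTp p (u k - g)) atTop (𝓝 0) := by
  intro hconv
  have hlim : Tendsto (fun k => 1 - T.Mp p (n k) g) atTop (𝓝 1) := by
    simpa using tendsto_const_nhds.sub (hg.2.comp hn)
  have hle : ∀ k, 1 - T.Mp p (n k) g ≤ T.normTp p (u k - g) := fun k =>
    calc 1 - T.Mp p (n k) g ≤ T.Mp p (n k) (u k - g) := by
          linarith [T.Mp_le_Mp_sub_add hp (n k) (u k) g, hmass k]
      _ ≤ T.normTp p (u k - g) := le_ciSup (T.memTp_sub hp (hu k) hg.1) (n k)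
  linarith [le_of_tendsto_of_tendsto' hlim hconv hle]

end HomTree

/-- For `q ≥ 2` and `1 ≤ p < ∞`, no self-map of the `(q+1)`-homogeneous tree induces a
compact composition operator on `T_{p,0}`. -/
theorem no_compact_comp_Tp0 (q : ℕ) (hq : 2 ≤ q) (T : HomTree q)
    (p : ℝ) (hp : 1 ≤ p) (phi : T.V → T.V) :
    ¬ T.CompactCompTp0 p phi := by
  rintro ⟨-, hcompact⟩
  have hp0 : 0 < p := zero_lt_one.trans_le hp
  let f : ℕ → T.V → ℂ := fun k => Set.indicator (phi '' {v | T.level v = k}) 1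
  have hf_norm : ∀ k v, ‖f k v‖ ≤ 1 := fun k v =>
    (norm_indicator_le_norm_self _ _).trans (by simp)
  have hf_mem : ∀ k, T.memTp0 p (f k) := fun k =>
    T.memTp0_of_support_finite hp0.ne'
      (((T.finiteLevel k).image phi).subset Set.support_indicator_subset)
  obtain ⟨g, s, hg, hs, hconv⟩ :=
    hcompact f hf_mem fun k => T.normTp_le_of_norm_le hp0 (hf_norm k)
  have hf_comp : ∀ k v, T.level v = k → (f k ∘ phi) v = 1 := fun k v hv =>
    Set.indicator_of_mem (Set.mem_image_of_mem phi hv) 1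
  exact T.not_tendsto_normTp_sub hp
    (fun k => T.memTp_of_norm_le hp0 fun v => hf_norm (s k) (phi v))
    (fun k => (T.Mp_eq_one (by omega) (hf_comp (s k))).ge) hs.tendsto_atTop hg hconv
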